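/- Fix M > 0, ℓ > 12M², and E with E² ≥ 1 and E² < E^max(ℓ). Then the equation E_ℓ^Sch(r) = E² has exactly two solutions r₀ < r₁ in (2M, ∞); they satisfy 2M < r₀ < r_max^Sch(ℓ) < r₁ < r_min^Sch(ℓ), each is a simple root, and E_ℓ^Sch(r) < E² for every r ≥ r_min^Sch(ℓ). -/

import Mathlib

/-- The Schwarzschild effective potential `E_ℓ^Sch(r) = (1 - 2M/r)(1 + ℓ/r²)`. -/
noncomputable def Esch (M ℓ r : ℝ) : ℝ := (1 - 2*M/r) * (1 + ℓ/r^2)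

/-- `r_max^Sch(ℓ)`, the location of the maximum of the effective potential. -/
noncomputable def rmaxSch (M ℓ : ℝ) : ℝ := ℓ/(2*M) * (1 - Real.sqrt (1 - 12*M^2/ℓ))

/-- `r_min^Sch(ℓ)`, the location of the minimum of the effective potential. -/
noncomputable def rminSch (M ℓ : ℝ) : ℝ := ℓ/(2*M) * (1 + Real.sqrt (1 - 12*M^2/ℓ))

/-!
The derivative of `E_ℓ^Sch` is `2 (M r² - ℓ r + 3 M ℓ) / r⁴`, whose numerator has the roots
`r_max < r_min` (Vieta: `M (r_max + r_min) = ℓ`, `r_max r_min = 3ℓ`). Hence the potential rises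
from `E_ℓ^Sch(2M) = 0` to `E^max` on `[2M, r_max]` and falls on `[r_max, r_min]`, while
`E_ℓ^Sch(r) - 1 = -(M (r - r_max)(r - r_min) + M (r² - ℓ)) / r³ < 0` for `r ≥ r_min`.
So the intermediate value theorem gives one root of `E_ℓ^Sch = E²` on each monotone branch,
strict monotonicity makes these the only ones, and they lie off the critical points.
-/

open Set

section Schwarzschild

variable {M ℓ r : ℝ}

lemma Esch_two_mul_self (hM : M ≠ 0) : Esch M ℓ (2*M) = 0 := by
  simp [Esch, hM]

lemma Esch_sub_one (hr : r ≠ 0) :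
    Esch M ℓ r - 1 = -(2*M*r^2 - ℓ*r + 2*M*ℓ) / r^3 := by
  unfold Esch
  field_simp
  ring

lemma hasDerivAt_Esch (hr : r ≠ 0) :
    HasDerivAt (Esch M ℓ) (2*(M*r^2 - ℓ*r + 3*M*ℓ) / r^4) r := by
  have hfac := ((hasDerivAt_const r (2*M)).div (hasDerivAt_id r) hr).const_sub 1
  have hcen := ((hasDerivAt_const r ℓ).div (hasDerivAt_pow 2 r) (pow_ne_zero 2 hr)).const_add 1
  refine (hfac.mul hcen).congr_deriv ?_
  simp only [Pi.div_apply, id]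
  field_simp
  ring

lemma continuousOn_Esch : ContinuousOn (Esch M ℓ) (Ioi 0) := fun _ hr =>
  (hasDerivAt_Esch (ne_of_gt hr)).continuousAt.continuousWithinAt

lemma rmaxSch_add_rminSch (hM : M ≠ 0) : M * (rmaxSch M ℓ + rminSch M ℓ) = ℓ := by
  unfold rmaxSch rminSch
  field_simp
  ring

lemma rmaxSch_mul_rminSch (hM : M ≠ 0) (hℓ : 12*M^2 ≤ ℓ) :
    rmaxSch M ℓ * rminSch M ℓ = 3*ℓ := by
  have hℓ0 : 0 < ℓ := (by positivity : 0 < 12*M^2).trans_le hℓ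
  have hdisc : 0 ≤ 1 - 12*M^2/ℓ := by rw [sub_nonneg, div_le_one hℓ0]; exact hℓ
  have hsq := Real.sq_sqrt hdisc
  unfold rmaxSch rminSch
  calc ℓ/(2*M) * (1 - √(1 - 12*M^2/ℓ)) * (ℓ/(2*M) * (1 + √(1 - 12*M^2/ℓ)))
      = (ℓ/(2*M))^2 * (1 - √(1 - 12*M^2/ℓ)^2) := by ring
    _ = 3*ℓ := by rw [hsq]; field_simp; ring

lemma quadratic_eq_mul_sub_rmaxSch_mul_sub_rminSch (hM : M ≠ 0) (hℓ : 12*M^2 ≤ ℓ)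
    (r : ℝ) :
    M*r^2 - ℓ*r + 3*M*ℓ = M * (r - rmaxSch M ℓ) * (r - rminSch M ℓ) := by
  linear_combination r * rmaxSch_add_rminSch (ℓ := ℓ) hM - M * rmaxSch_mul_rminSch hM hℓ

lemma deriv_Esch (hM : M ≠ 0) (hℓ : 12*M^2 ≤ ℓ) (hr : r ≠ 0) :
    deriv (Esch M ℓ) r = 2 * (M * (r - rmaxSch M ℓ) * (r - rminSch M ℓ)) / r^4 := by
  rw [(hasDerivAt_Esch hr).deriv, quadratic_eq_mul_sub_rmaxSch_mul_sub_rminSch hM hℓ]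

lemma deriv_Esch_ne_zero (hM : M ≠ 0) (hℓ : 12*M^2 ≤ ℓ) (hr : r ≠ 0)
    (hra : r ≠ rmaxSch M ℓ) (hrb : r ≠ rminSch M ℓ) : deriv (Esch M ℓ) r ≠ 0 := by
  rw [deriv_Esch hM hℓ hr]
  exact div_ne_zero (mul_ne_zero two_ne_zero (mul_ne_zero (mul_ne_zero hM (sub_ne_zero.2 hra))
    (sub_ne_zero.2 hrb))) (pow_ne_zero 4 hr)

lemma rmaxSch_lt_rminSch (hM : 0 < M) (hℓ : 12*M^2 < ℓ) : rmaxSch M ℓ < rminSch M ℓ := by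
  have hℓ0 : 0 < ℓ := (by positivity : 0 < 12*M^2).trans hℓ
  have hdisc : 0 < 1 - 12*M^2/ℓ := by rw [sub_pos, div_lt_one hℓ0]; exact hℓ
  unfold rmaxSch rminSch
  gcongr
  linarith [Real.sqrt_pos.2 hdisc]

lemma two_mul_lt_rmaxSch (hM : 0 < M) (hℓ : 12*M^2 < ℓ) : 2*M < rmaxSch M ℓ := by
  have hab := rmaxSch_lt_rminSch hM hℓ
  have hsum := rmaxSch_add_rminSch (ℓ := ℓ) hM.ne'
  have h6b : 6*M < rminSch M ℓ := by nlinarith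
  -- `M (2M - r_max)(2M - r_min) = M (4M² + ℓ) > 0`, and the second factor is negative.
  have hprod := quadratic_eq_mul_sub_rmaxSch_mul_sub_rminSch hM.ne' hℓ.le (2*M)
  by_contra! h
  have : M * (2*M - rmaxSch M ℓ) * (2*M - rminSch M ℓ) ≤ 0 :=
    mul_nonpos_of_nonneg_of_nonpos (mul_nonneg hM.le (by linarith)) (by linarith)
  nlinarith

lemma strictMonoOn_Esch (hM : 0 < M) (hℓ : 12*M^2 < ℓ) :
    StrictMonoOn (Esch M ℓ) (Ioc 0 (rmaxSch M ℓ)) := by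
  have hab := rmaxSch_lt_rminSch hM hℓ
  refine strictMonoOn_of_deriv_pos (convex_Ioc _ _)
    (continuousOn_Esch.mono Ioc_subset_Ioi_self) fun x hx => ?_
  rw [interior_Ioc] at hx
  rw [deriv_Esch hM.ne' hℓ.le hx.1.ne', mul_assoc M]
  have := mul_pos_of_neg_of_neg (sub_neg.2 hx.2) (sub_neg.2 (hx.2.trans hab))
  exact div_pos (mul_pos two_pos (mul_pos hM this)) (pow_pos hx.1 4)

lemma strictAntiOn_Esch (hM : 0 < M) (hℓ : 12*M^2 < ℓ) :
    StrictAntiOn (Esch M ℓ) (Icc (rmaxSch M ℓ) (rminSch M ℓ)) := by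
  have ha0 : 0 < rmaxSch M ℓ := by linarith [two_mul_lt_rmaxSch hM hℓ]
  refine strictAntiOn_of_deriv_neg (convex_Icc _ _)
    (continuousOn_Esch.mono fun x hx => ha0.trans_le hx.1) fun x hx => ?_
  rw [interior_Icc] at hx
  have hx0 : 0 < x := ha0.trans hx.1
  rw [deriv_Esch hM.ne' hℓ.le hx0.ne', mul_assoc M]
  have := mul_neg_of_pos_of_neg (sub_pos.2 hx.1) (sub_neg.2 hx.2)
  exact div_neg_of_neg_of_pos (mul_neg_of_pos_of_neg two_pos (mul_neg_of_pos_of_neg hM this))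
    (pow_pos hx0 4)

lemma Esch_lt_one_of_rminSch_le (hM : 0 < M) (hℓ : 12*M^2 < ℓ) (hr : rminSch M ℓ ≤ r) :
    Esch M ℓ r < 1 := by
  have hab := rmaxSch_lt_rminSch hM hℓ
  have ha0 : 0 < rmaxSch M ℓ := by linarith [two_mul_lt_rmaxSch hM hℓ]
  have hr0 : 0 < r := by linarith
  have hℓr : ℓ < r^2 := by
    nlinarith [rmaxSch_mul_rminSch hM.ne' hℓ.le, mul_le_mul hr hr (by linarith) hr0.le]
  have hq : 0 ≤ M * (r - rmaxSch M ℓ) * (r - rminSch M ℓ) :=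
    mul_nonneg (mul_nonneg hM.le (sub_nonneg.2 (hab.le.trans hr))) (sub_nonneg.2 hr)
  have hnum : 0 < 2*M*r^2 - ℓ*r + 2*M*ℓ := by
    nlinarith [quadratic_eq_mul_sub_rmaxSch_mul_sub_rminSch hM.ne' hℓ.le r,
      mul_pos hM (sub_pos.2 hℓr)]
  have : Esch M ℓ r - 1 < 0 := by
    rw [Esch_sub_one hr0.ne']
    exact div_neg_of_neg_of_pos (neg_neg_of_pos hnum) (by positivity)
  linarith

end Schwarzschild

theorem stmt10 (M ℓ E : ℝ) (hM : 0 < M) (hℓ : 12*M^2 < ℓ) (hE1 : 1 ≤ E^2)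
    (hEmax : E^2 < Esch M ℓ (rmaxSch M ℓ)) :
    ∃ r0 r1 : ℝ,
      2*M < r0 ∧ r0 < rmaxSch M ℓ ∧ rmaxSch M ℓ < r1 ∧ r1 < rminSch M ℓ ∧
      Esch M ℓ r0 = E^2 ∧ Esch M ℓ r1 = E^2 ∧
      deriv (Esch M ℓ) r0 ≠ 0 ∧ deriv (Esch M ℓ) r1 ≠ 0 ∧
      (∀ r ∈ Set.Ioi (2*M), Esch M ℓ r = E^2 → r = r0 ∨ r = r1) ∧
      (∀ r : ℝ, rminSch M ℓ ≤ r → Esch M ℓ r < E^2) := by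
  have h2Ma := two_mul_lt_rmaxSch hM hℓ
  have hab := rmaxSch_lt_rminSch hM hℓ
  have hbeyond : ∀ r, rminSch M ℓ ≤ r → Esch M ℓ r < E^2 := fun r hr =>
    (Esch_lt_one_of_rminSch_le hM hℓ hr).trans_le hE1
  obtain ⟨r0, ⟨h2M0, h0a⟩, hr0⟩ := intermediate_value_Ioo h2Ma.le
    (continuousOn_Esch.mono fun x hx => (by positivity : (0:ℝ) < 2*M).trans_le hx.1)
    (show E^2 ∈ Ioo (Esch M ℓ (2*M)) (Esch M ℓ (rmaxSch M ℓ)) by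
      rw [Esch_two_mul_self hM.ne']; exact ⟨by linarith, hEmax⟩)
  obtain ⟨r1, ⟨ha1, h1b⟩, hr1⟩ := intermediate_value_Ioo' hab.le
    (continuousOn_Esch.mono fun x hx => (by linarith : (0:ℝ) < rmaxSch M ℓ).trans_le hx.1)
    ⟨hbeyond _ le_rfl, hEmax⟩
  have h0pos : 0 < r0 := by linarith
  refine ⟨r0, r1, h2M0, h0a, ha1, h1b, hr0, hr1,
    deriv_Esch_ne_zero hM.ne' hℓ.le h0pos.ne' h0a.ne (h0a.trans hab).ne,
    deriv_Esch_ne_zero hM.ne' hℓ.le (by linarith) ha1.ne' h1b.ne, fun r hr heq => ?_, hbeyond⟩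
  have hr0' : 0 < r := (by positivity : (0:ℝ) < 2*M).trans hr
  rcases le_or_gt r (rmaxSch M ℓ) with hra | hra
  · exact .inl <| (strictMonoOn_Esch hM hℓ).injOn ⟨hr0', hra⟩ ⟨h0pos, h0a.le⟩
      (heq.trans hr0.symm)
  rcases lt_or_ge r (rminSch M ℓ) with hrb | hrb
  · exact .inr <| (strictAntiOn_Esch hM hℓ).injOn ⟨hra.le, hrb.le⟩ ⟨ha1.le, h1b.le⟩
      (heq.trans hr1.symm)
  · exact absurd heq (hbeyond r hrb).ne
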